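/- arXiv:1202.5811 — 2 statements merged into one kernel-verified Lean document; each statement's English description precedes it below -/
import Mathlib

section
/- Let T be a third order source form. Then its Helmholtz components satisfy the integrability conditions, for all a,b,c,d (summation over repeated indices i,j,k): (1) H^{ab;cd,∅} + H^{cd;ab,∅} = D_i H^{ab;cd,i} − D_i D_j H^{ab;cd,ij} + D_i D_j D_k H^{ab;cd,ijk}; (2) H^{ab;cd,i} − H^{cd;ab,i} = 2 D_j H^{ab;cd,ij} − 3 D_j D_k H^{ab;cd,ijk}; (3) H^{ab;cd,ij} + H^{cd;ab,ij} = 3 D_k H^{ab;cd,ijk}; (4) H^{ab;cd,ijk} − H^{cd;ab,ijk} = 0. -/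
open scoped BigOperators

namespace JetMetric

/-- Unordered multi-indices: multisets of coordinate indices. -/
abbrev MIdx (m : ℕ) := Multiset (Fin m)

/-- The (infinite) jet space of metrics on ℝ^m: base coordinates `x^i` together with
all derivative coordinates `g_{ab,I}`. -/
abbrev Jet (m : ℕ) := (Fin m → ℝ) × (Fin m → Fin m → MIdx m → ℝ)

/-- The zeroth order coordinates `g_{ab}` as a matrix. -/
noncomputable def gMat {m : ℕ} (z : Jet m) : Matrix (Fin m) (Fin m) ℝ :=
  Matrix.of fun a b => z.2 a b 0

/-- The domain of interest: symmetric jets with nondegenerate metric. -/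
def JetDom (m : ℕ) : Set (Jet m) :=
  {z | (∀ a b I, z.2 a b I = z.2 b a I) ∧ (gMat z).det ≠ 0}

/-- The symmetrized pair delta `δ^a_{(c} δ^b_{d)}`. -/
noncomputable def pairWt {m : ℕ} (a b c d : Fin m) : ℝ :=
  ((if a = c ∧ b = d then (1 : ℝ) else 0) + (if a = d ∧ b = c then (1 : ℝ) else 0)) / 2

/-- The symmetrized multi-index delta `δ^{(i₁}_{j₁} ⋯ δ^{i_k)}_{j_k}` for unordered
multi-indices `I`, `J`. -/
noncomputable def idxWt {m : ℕ} (I J : MIdx m) : ℝ :=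
  if I = J then
    (∏ s ∈ I.toFinset, (Nat.factorial (I.count s) : ℝ)) /
      (Nat.factorial (Multiset.card I) : ℝ)
  else 0

/-- The weighted partial derivative operator `∂^{ab,I}`, realized as the directional
derivative along the symmetrized coordinate direction determined by
`∂^{ab,I} g_{cd,J} = δ^a_{(c} δ^b_{d)} δ^{(i₁}_{j₁} ⋯ δ^{i_k)}_{j_k}`. -/
noncomputable def pd {m : ℕ} (a b : Fin m) (I : MIdx m) (F : Jet m → ℝ) : Jet m → ℝ :=
  fun z => deriv (fun t : ℝ =>
    F (z.1, fun c d J => z.2 c d J + t * (pairWt a b c d * idxWt I J))) 0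

/-- The partial derivative `∂/∂x^i` in a base coordinate. -/
noncomputable def xpd {m : ℕ} (i : Fin m) (F : Jet m → ℝ) : Jet m → ℝ :=
  fun z => deriv (fun t : ℝ => F (Function.update z.1 i (z.1 i + t), z.2)) 0

/-- The partial derivative `∂/∂x^i` of a function on the base `ℝ^m`. -/
noncomputable def vpd {m : ℕ} (i : Fin m) (f : (Fin m → ℝ) → ℝ) : (Fin m → ℝ) → ℝ :=
  fun x => deriv (fun t : ℝ => f (Function.update x i (x i + t))) 0

/-- The total derivative operator
`D_i = ∂/∂x^i + Σ_{|I| ≥ 0} g_{ab,Ii} ∂^{ab,I}`, the Einstein sum running over all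
ordered multi-indices `I` (lists) and all `a`, `b`. -/
noncomputable def Dt {m : ℕ} (i : Fin m) (F : Jet m → ℝ) : Jet m → ℝ :=
  fun z => xpd i F z +
    ∑' l : List (Fin m), ∑ a : Fin m, ∑ b : Fin m,
      z.2 a b ((l : MIdx m) + {i}) * pd a b (l : MIdx m) F z

/-- The iterated total derivative `D_I = D_{i₁} ⋯ D_{i_k}` along an ordered multi-index. -/
noncomputable def DtL {m : ℕ} (l : List (Fin m)) (F : Jet m → ℝ) : Jet m → ℝ :=
  l.foldr Dt F

/-- The higher Euler–Lagrange operators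
`E^{ab,I}(F) = Σ_{|J| ≥ 0} binom(|I|+|J|,|I|) (−D)_J (∂^{ab,IJ} F)`, the sum running over
all ordered multi-indices `J`. -/
noncomputable def hEL {m : ℕ} (a b : Fin m) (I : MIdx m) (F : Jet m → ℝ) : Jet m → ℝ :=
  fun z => ∑' J : List (Fin m),
    (Nat.choose (Multiset.card I + J.length) (Multiset.card I) : ℝ) * (-1 : ℝ) ^ J.length *
      DtL J (pd a b (I + (J : MIdx m)) F) z

/-- The Euler–Lagrange operator `E^{ab}(L) = Σ_{|I| ≥ 0} (−D)_I (∂^{ab,I} L)`. -/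
noncomputable def EL {m : ℕ} (a b : Fin m) (F : Jet m → ℝ) : Jet m → ℝ := hEL a b 0 F

/-- The Helmholtz components `H^{ab;cd,I} = ∂^{cd,I} T^{ab} − (−1)^{|I|} E^{ab,I}(T^{cd})`. -/
noncomputable def Helm {m : ℕ} (T : Fin m → Fin m → Jet m → ℝ) (a b c d : Fin m)
    (I : MIdx m) : Jet m → ℝ :=
  fun z => pd c d I (T a b) z - (-1 : ℝ) ^ (Multiset.card I) * hEL a b I (T c d) z

/-- Truncated jet coordinates of order ≤ k (derivative slots labelled by ordered tuples). -/
abbrev Trunc (m k : ℕ) :=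
  (Fin m → ℝ) × (Fin m → Fin m → (j : Fin (k + 1)) → ((Fin (j : ℕ) → Fin m) → ℝ))

/-- Projection from the jet space onto the truncated coordinates. -/
noncomputable def truncProj (m k : ℕ) (z : Jet m) : Trunc m k :=
  (z.1, fun a b _j p => z.2 a b ((List.ofFn p : List (Fin m)) : MIdx m))

/-- The nondegeneracy domain in the truncated coordinates. -/
def truncDom (m k : ℕ) : Set (Trunc m k) :=
  {w | (Matrix.of fun a b => w.2 a b ⟨0, Nat.succ_pos k⟩ (fun i => i.elim0)).det ≠ 0}

/-- `F` is a differential function of order `k`: on the domain where `det g ≠ 0` it is a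
smooth function of the variables `x^i` and `g_{ab,I}` with `|I| ≤ k` only. -/
def IsDF (m k : ℕ) (F : Jet m → ℝ) : Prop :=
  ∃ f : Trunc m k → ℝ, ContDiffOn ℝ (⊤ : ℕ∞) f (truncDom m k) ∧
    ∀ z, F z = f (truncProj m k z)

/-- A source form of order `k`: symmetric components `T^{ab} = T^{(ab)}`, each a
differential function of order `k`. -/
structure SourceForm (m k : ℕ) where
  T : Fin m → Fin m → Jet m → ℝ
  symm : ∀ a b, T a b = T b a
  order : ∀ a b, IsDF m k (T a b)

/-- The inverse metric `g^{ab}`. -/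
noncomputable def ginv {m : ℕ} (z : Jet m) : Matrix (Fin m) (Fin m) ℝ := (gMat z)⁻¹

/-- The Christoffel symbols `Γ^a_{bc} = ½ g^{ad}(g_{db,c} + g_{dc,b} − g_{bc,d})`. -/
noncomputable def Gamma {m : ℕ} (a b c : Fin m) (z : Jet m) : ℝ :=
  (1 / 2) * ∑ d, ginv z a d * (z.2 d b {c} + z.2 d c {b} - z.2 b c {d})

/-- `T` is divergence-free: `D_b T^{ab} + Γ^a_{bc} T^{bc} = 0` identically. -/
def DivFree {m k : ℕ} (S : SourceForm m k) : Prop :=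
  ∀ a, ∀ z ∈ JetDom m,
    (∑ b, Dt b (S.T a b) z) + (∑ b, ∑ c, Gamma a b c z * S.T b c z) = 0

/-- Evolutionary components `X_{ev,ab} = Q_{ab} − P^c g_{ab,c}` of a projectable
vector field `X = P^i ∂/∂x^i + Q_{ab} ∂^{ab}`. -/
noncomputable def Xev {m : ℕ} (P : Fin m → (Fin m → ℝ) → ℝ) (Q : Fin m → Fin m → Jet m → ℝ)
    (a b : Fin m) : Jet m → ℝ :=
  fun z => Q a b z - ∑ c, P c z.1 * z.2 a b {c}

/-- The prolongation `pr X = P^i D_i + Σ_{|I| ≥ 0} D_I(X_{ev,ab}) ∂^{ab,I}` of a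
projectable vector field, acting on differential functions. -/
noncomputable def prX {m : ℕ} (P : Fin m → (Fin m → ℝ) → ℝ) (Q : Fin m → Fin m → Jet m → ℝ)
    (F : Jet m → ℝ) : Jet m → ℝ :=
  fun z => (∑ i, P i z.1 * Dt i F z) +
    ∑' l : List (Fin m), ∑ a, ∑ b, DtL l (Xev P Q a b) z * pd a b (l : MIdx m) F z

/-- The components of the Lie derivative of a source form along the prolongation of a
projectable vector field:
`(ℒ_X T)^{ab} = pr X(T^{ab}) + T^{cd} ∂^{ab,∅} Q_{cd} + (∂P^j/∂x^j) T^{ab}`. -/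
noncomputable def LieT {m : ℕ} (P : Fin m → (Fin m → ℝ) → ℝ) (Q : Fin m → Fin m → Jet m → ℝ)
    (T : Fin m → Fin m → Jet m → ℝ) (a b : Fin m) : Jet m → ℝ :=
  fun z => prX P Q (T a b) z + (∑ c, ∑ d, T c d z * pd a b 0 (Q c d) z)
    + (∑ j, vpd j (P j) z.1) * T a b z

/-- The `∂^{ab}`-components `Q_{ab} = −2 ξ^c_{,(a} g_{b)c}` of the lift `X_ξ` of a vector
field `ξ` on `ℝ^m` to the bundle of metrics. -/
noncomputable def liftQ {m : ℕ} (ξ : Fin m → (Fin m → ℝ) → ℝ) (a b : Fin m) : Jet m → ℝ :=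
  fun z => -∑ c, (vpd a (ξ c) z.1 * z.2 b c 0 + vpd b (ξ c) z.1 * z.2 a c 0)

/-- `T` is natural: `pr X_ξ(T^{ab}) − 2 ξ^{(a}_{,c} T^{b)c} + ξ^c_{,c} T^{ab} = 0`
identically, for every smooth vector field `ξ` on `ℝ^m`. -/
def Natural {m k : ℕ} (S : SourceForm m k) : Prop :=
  ∀ ξ : Fin m → (Fin m → ℝ) → ℝ, (∀ c, ContDiff ℝ (⊤ : ℕ∞) (ξ c)) →
    ∀ a b, ∀ z ∈ JetDom m,
      prX ξ (liftQ ξ) (S.T a b) z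
        - ((∑ c, vpd c (ξ a) z.1 * S.T b c z) + (∑ c, vpd c (ξ b) z.1 * S.T a c z))
        + (∑ c, vpd c (ξ c) z.1) * S.T a b z = 0

/-- `T` admits translational conservation laws: `E^{hk}(g_{ab,p} T^{ab}) = 0` identically. -/
def TranslCL {m k : ℕ} (S : SourceForm m k) : Prop :=
  ∀ p h k', ∀ z ∈ JetDom m,
    EL h k' (fun w => ∑ a, ∑ b, w.2 a b {p} * S.T a b w) z = 0

/-- `T` is locally variational: all Helmholtz components vanish identically. -/
def LocallyVariational {m k : ℕ} (S : SourceForm m k) : Prop :=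
  ∀ a b c d (I : MIdx m), ∀ z ∈ JetDom m, Helm S.T a b c d I z = 0

/-- `F` has no explicit dependence on the base coordinates `x^i`. -/
def NoExplicitX {m : ℕ} (F : Jet m → ℝ) : Prop :=
  ∀ x x' g, F (x, g) = F (x', g)

/-!
A third order source form has `∂^{ab,IJ} T^{cd} = 0` as soon as `|I| + |J| > 3`, so each higher
Euler operator `E^{ab,I}(T^{cd})` is the finite sum of `binom(|I|+|J|,|I|) (-D)_J ∂^{ab,IJ} T^{cd}`
over `|J| ≤ 3 - |I|`, and every Helmholtz component becomes an explicit combination of total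
derivatives of `∂^{cd,I} T^{ab}` and `∂^{ab,I} T^{cd}`. The four conditions are then linear
identities between such combinations. What makes them usable is that the total derivatives are
linear on differential functions at nondegenerate jets: a differential function is a smooth
function of finitely many coordinates, so its partial derivatives are line derivatives of a
smooth function and the series defining `D_i` is a finite sum.
-/

open Set

variable {m : ℕ}

section Lists

def listsOfLength (m : ℕ) : ℕ → Finset (List (Fin m))
  | 0 => {[]}
  | n + 1 => (Finset.univ ×ˢ listsOfLength m n).image fun p => p.1 :: p.2

lemma mem_listsOfLength {n : ℕ} {l : List (Fin m)} : l ∈ listsOfLength m n ↔ l.length = n := by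
  induction n generalizing l with
  | zero => simp [listsOfLength, List.length_eq_zero_iff]
  | succ n ih =>
    cases l with
    | nil => simp [listsOfLength]
    | cons a l => simp [listsOfLength, ih]

lemma sum_listsOfLength_zero (f : List (Fin m) → ℝ) : ∑ l ∈ listsOfLength m 0, f l = f [] := by
  simp [listsOfLength]

lemma sum_listsOfLength_succ {n : ℕ} (f : List (Fin m) → ℝ) :
    ∑ l ∈ listsOfLength m (n + 1), f l = ∑ i : Fin m, ∑ l ∈ listsOfLength m n, f (i :: l) := by
  rw [listsOfLength, Finset.sum_image (by simp), Finset.sum_product]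

lemma tsum_eq_sum_listsOfLength {K : ℕ} {f : List (Fin m) → ℝ}
    (h : ∀ l : List (Fin m), K < l.length → f l = 0) :
    ∑' l, f l = ∑ n ∈ Finset.range (K + 1), ∑ l ∈ listsOfLength m n, f l := by
  rw [← Finset.sum_biUnion]
  · refine tsum_eq_sum fun l hl => h l ?_
    simpa [mem_listsOfLength, Nat.lt_succ_iff] using hl
  · intro i _ j _ hij
    simp only [Function.onFun, Finset.disjoint_left, mem_listsOfLength]
    omega

lemma summable_of_eq_zero_of_length_lt {K : ℕ} {f : List (Fin m) → ℝ}
    (h : ∀ l : List (Fin m), K < l.length → f l = 0) : Summable f := by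
  refine summable_of_ne_finset_zero (s := (Finset.range (K + 1)).biUnion (listsOfLength m))
    fun l hl => h l ?_
  simpa [mem_listsOfLength, Nat.lt_succ_iff] using hl

lemma add_coe_cons (I : MIdx m) (j : Fin m) (l : List (Fin m)) :
    I + ((j :: l : List (Fin m)) : MIdx m) = I + {j} + l := by
  rw [← Multiset.cons_coe, ← Multiset.singleton_add, add_assoc]

end Lists


section Directions

def nondegSet (m : ℕ) : Set (Jet m) := {z | (gMat z).det ≠ 0}

lemma eventually_add_smul_mem_nondegSet {z : Jet m} (hz : z ∈ nondegSet m) (v : Jet m) :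
    ∀ᶠ t in nhds (0 : ℝ), z + t • v ∈ nondegSet m := by
  have hc : Continuous fun t : ℝ => (gMat (z + t • v)).det := by
    refine Continuous.matrix_det (continuous_matrix fun a b => ?_)
    change Continuous fun t : ℝ => z.2 a b 0 + t * v.2 a b 0
    fun_prop
  exact hc.continuousAt.eventually_ne (by simpa [nondegSet] using hz)

noncomputable def xDir (m : ℕ) (i : Fin m) : Jet m := (Pi.single i 1, 0)

noncomputable def gDir (m : ℕ) (a b : Fin m) (I : MIdx m) : Jet m :=
  (0, fun c d J => pairWt a b c d * idxWt I J)

lemma xpd_eq_lineDeriv (i : Fin m) (F : Jet m → ℝ) (z : Jet m) :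
    xpd i F z = lineDeriv ℝ F z (xDir m i) := by
  have hline : ∀ t : ℝ, (Function.update z.1 i (z.1 i + t), z.2) = z + t • xDir m i := by
    intro t
    refine Prod.ext (funext fun j => ?_) (by simp [xDir])
    by_cases h : j = i
    · subst h; simp [xDir]
    · simp [xDir, h]
  simp only [xpd, lineDeriv, hline]

lemma pd_eq_lineDeriv (a b : Fin m) (I : MIdx m) (F : Jet m → ℝ) (z : Jet m) :
    pd a b I F z = lineDeriv ℝ F z (gDir m a b I) := by
  have hline : ∀ t : ℝ, (z.1, fun c d J => z.2 c d J + t * (pairWt a b c d * idxWt I J))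
      = z + t • gDir m a b I := fun t => Prod.ext (by simp [gDir]) rfl
  simp only [pd, lineDeriv, hline]

end Directions

section Truncation

lemma truncProj_add {k : ℕ} (z w : Jet m) :
    truncProj m k (z + w) = truncProj m k z + truncProj m k w := rfl

lemma truncProj_smul {k : ℕ} (t : ℝ) (z : Jet m) :
    truncProj m k (t • z) = t • truncProj m k z := rfl

lemma isOpen_truncDom {k : ℕ} : IsOpen (truncDom m k) := by
  have hc : Continuous fun w : Trunc m k =>
      (Matrix.of fun a b => w.2 a b ⟨0, Nat.succ_pos k⟩ (fun i => i.elim0)).det := by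
    refine Continuous.matrix_det (continuous_matrix fun a b => ?_)
    fun_prop
  exact isOpen_compl_singleton.preimage hc

lemma truncProj_gDir_of_lt_card {k : ℕ} {I : MIdx m} (hI : k < Multiset.card I) (a b : Fin m) :
    truncProj m k (gDir m a b I) = 0 := by
  refine Prod.ext rfl (funext fun c => funext fun d => funext fun j => funext fun p => ?_)
  have hne : I ≠ ((List.ofFn p : List (Fin m)) : MIdx m) := by
    intro h
    have := congrArg Multiset.card h
    simp only [Multiset.coe_card, List.length_ofFn] at this
    omega
  change pairWt a b c d * idxWt I _ = 0
  rw [idxWt, if_neg hne, mul_zero]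

noncomputable def truncRes (m k : ℕ) : Trunc m (k + 1) →L[ℝ] Trunc m k :=
  LinearMap.toContinuousLinearMap
    { toFun := fun w => (w.1, fun a b j p => w.2 a b (Fin.castSucc j) p)
      map_add' := fun _ _ => rfl
      map_smul' := fun _ _ => rfl }

lemma truncRes_truncProj {k : ℕ} (z : Jet m) :
    truncRes m k (truncProj m (k + 1) z) = truncProj m k z := rfl

lemma mapsTo_truncRes {k : ℕ} : MapsTo (truncRes m k) (truncDom m (k + 1)) (truncDom m k) :=
  fun _ hw => hw

end Truncation


section DifferentialFunctions

lemma IsDF.mono {k K : ℕ} {F : Jet m → ℝ} (h : IsDF m k F) (hkK : k ≤ K) : IsDF m K F := by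
  induction K, hkK using Nat.le_induction with
  | base => exact h
  | succ K _ ih =>
    obtain ⟨f, hf, hF⟩ := ih
    exact ⟨f ∘ truncRes m K, hf.comp (truncRes m K).contDiff.contDiffOn mapsTo_truncRes,
      fun z => (hF z).trans (congrArg f (truncRes_truncProj z).symm)⟩

lemma IsDF.add {k : ℕ} {F G : Jet m → ℝ} (hF : IsDF m k F) (hG : IsDF m k G) :
    IsDF m k (F + G) := by
  obtain ⟨f, hf, hfF⟩ := hF
  obtain ⟨g, hg, hgG⟩ := hG
  exact ⟨f + g, hf.add hg, fun z => by simp [hfF, hgG]⟩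

lemma IsDF.const_smul {k : ℕ} {F : Jet m → ℝ} (hF : IsDF m k F) (c : ℝ) :
    IsDF m k (c • F) := by
  obtain ⟨f, hf, hfF⟩ := hF
  exact ⟨c • f, hf.const_smul c, fun z => by simp [hfF]⟩

lemma IsDF.lineDifferentiableAt {k : ℕ} {F : Jet m → ℝ} (h : IsDF m k F) {z : Jet m}
    (hz : z ∈ nondegSet m) (v : Jet m) : LineDifferentiableAt ℝ F z v := by
  obtain ⟨f, hf, hfF⟩ := h
  have hfz : DifferentiableAt ℝ f (truncProj m k z) :=
    (hf.contDiffAt (isOpen_truncDom.mem_nhds hz)).differentiableAt (by simp)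
  have hline : (fun t : ℝ => F (z + t • v)) =
      fun t => f (truncProj m k z + t • truncProj m k v) := by
    funext t
    rw [hfF, truncProj_add, truncProj_smul]
  unfold LineDifferentiableAt
  rw [hline]
  exact hfz.lineDifferentiableAt

lemma isDF_lineDeriv {k : ℕ} {F : Jet m → ℝ} (h : IsDF m k F) (v : Jet m) :
    IsDF m k (fun z => lineDeriv ℝ F z v) := by
  obtain ⟨f, hf, hfF⟩ := h
  have hfderiv : ContDiffOn ℝ (⊤ : ℕ∞) (fun w => fderiv ℝ f w (truncProj m k v))
      (truncDom m k) :=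
    (ContinuousLinearMap.apply ℝ ℝ (truncProj m k v)).contDiff.comp_contDiffOn
      (hf.fderiv_of_isOpen isOpen_truncDom (by exact_mod_cast le_top))
  refine ⟨fun w => lineDeriv ℝ f w (truncProj m k v), hfderiv.congr fun w hw => ?_, fun z => ?_⟩
  · exact ((hf.contDiffAt (isOpen_truncDom.mem_nhds hw)).differentiableAt
      (by simp)).lineDeriv_eq_fderiv
  · simp only [lineDeriv, hfF, truncProj_add, truncProj_smul]


lemma isDF_pd {k : ℕ} {F : Jet m → ℝ} (h : IsDF m k F) (a b : Fin m) (I : MIdx m) :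
    IsDF m k (pd a b I F) := by
  simpa only [← pd_eq_lineDeriv] using isDF_lineDeriv h (gDir m a b I)

lemma isDF_xpd {k : ℕ} {F : Jet m → ℝ} (h : IsDF m k F) (i : Fin m) :
    IsDF m k (xpd i F) := by
  simpa only [← xpd_eq_lineDeriv] using isDF_lineDeriv h (xDir m i)

lemma pd_eq_zero_of_lt_card {k : ℕ} {F : Jet m → ℝ} (h : IsDF m k F) {I : MIdx m}
    (hI : k < Multiset.card I) (a b : Fin m) : pd a b I F = 0 := by
  obtain ⟨f, -, hfF⟩ := h
  funext z
  have hconst : ∀ t : ℝ, F (z + t • gDir m a b I) = F z := fun t => by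
    rw [hfF, hfF, truncProj_add, truncProj_smul, truncProj_gDir_of_lt_card hI, smul_zero, add_zero]
  simp only [pd_eq_lineDeriv, lineDeriv, hconst, deriv_const, Pi.zero_apply]

def diffFun (m : ℕ) : Submodule ℝ (Jet m → ℝ) where
  carrier := {F | ∃ k, IsDF m k F}
  add_mem' := fun ⟨k, hF⟩ ⟨K, hG⟩ =>
    ⟨max k K, (hF.mono (le_max_left k K)).add (hG.mono (le_max_right k K))⟩
  zero_mem' := ⟨0, fun _ => 0, contDiffOn_const, fun _ => rfl⟩
  smul_mem' := fun c _ ⟨k, hF⟩ => ⟨k, hF.const_smul c⟩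

lemma IsDF.mem_diffFun {k : ℕ} {F : Jet m → ℝ} (h : IsDF m k F) : F ∈ diffFun m := ⟨k, h⟩

lemma pd_mem_diffFun {F : Jet m → ℝ} (hF : F ∈ diffFun m) (a b : Fin m) (I : MIdx m) :
    pd a b I F ∈ diffFun m :=
  let ⟨_, h⟩ := hF; (isDF_pd h a b I).mem_diffFun

end DifferentialFunctions

section TotalDerivative

lemma LineDifferentiableAt.lineDeriv_add {𝕜 E : Type*} [NontriviallyNormedField 𝕜]
    [AddCommGroup E] [Module 𝕜 E] {f g : E → 𝕜} {x v : E} (hf : LineDifferentiableAt 𝕜 f x v)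
    (hg : LineDifferentiableAt 𝕜 g x v) :
    lineDeriv 𝕜 (f + g) x v = lineDeriv 𝕜 f x v + lineDeriv 𝕜 g x v :=
  deriv_add hf hg

lemma lineDeriv_const_smul {𝕜 E : Type*} [NontriviallyNormedField 𝕜] [AddCommGroup E]
    [Module 𝕜 E] (f : E → 𝕜) (c : 𝕜) (x v : E) :
    lineDeriv 𝕜 (c • f) x v = c * lineDeriv 𝕜 f x v :=
  deriv_const_mul_field c

lemma lineDeriv_congr_of_eqOn {F G : Jet m → ℝ} (h : EqOn F G (nondegSet m)) {z : Jet m}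
    (hz : z ∈ nondegSet m) (v : Jet m) : lineDeriv ℝ F z v = lineDeriv ℝ G z v :=
  Filter.EventuallyEq.deriv_eq ((eventually_add_smul_mem_nondegSet hz v).mono fun _ ht => h ht)

lemma Dt_congr {F G : Jet m → ℝ} (h : EqOn F G (nondegSet m)) (i : Fin m) :
    EqOn (Dt i F) (Dt i G) (nondegSet m) := fun z hz => by
  simp only [Dt, xpd_eq_lineDeriv, pd_eq_lineDeriv, lineDeriv_congr_of_eqOn h hz]

lemma summable_Dt_series {F : Jet m → ℝ} (hF : F ∈ diffFun m) (i : Fin m) (z : Jet m) :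
    Summable fun l : List (Fin m) =>
      ∑ a, ∑ b, z.2 a b ((l : MIdx m) + {i}) * pd a b (l : MIdx m) F z := by
  obtain ⟨k, hF⟩ := hF
  refine summable_of_eq_zero_of_length_lt (K := k) fun l hl => ?_
  simp [pd_eq_zero_of_lt_card hF (I := (l : MIdx m)) (by simpa using hl)]

lemma Dt_add {F G : Jet m → ℝ} (hF : F ∈ diffFun m) (hG : G ∈ diffFun m) {z : Jet m}
    (hz : z ∈ nondegSet m) (i : Fin m) : Dt i (F + G) z = Dt i F z + Dt i G z := by
  have hadd : ∀ v, lineDeriv ℝ (F + G) z v = lineDeriv ℝ F z v + lineDeriv ℝ G z v :=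
    let ⟨_, hF⟩ := hF; let ⟨_, hG⟩ := hG
    fun v => LineDifferentiableAt.lineDeriv_add (hF.lineDifferentiableAt hz v)
      (hG.lineDifferentiableAt hz v)
  simp only [Dt, xpd_eq_lineDeriv, pd_eq_lineDeriv, hadd, mul_add, Finset.sum_add_distrib]
  simp only [← pd_eq_lineDeriv]
  rw [(summable_Dt_series hF i z).tsum_add (summable_Dt_series hG i z)]
  ring

lemma Dt_const_smul (F : Jet m → ℝ) (c : ℝ) (z : Jet m) (i : Fin m) :
    Dt i (c • F) z = c * Dt i F z := by
  simp only [Dt, xpd_eq_lineDeriv, pd_eq_lineDeriv, lineDeriv_const_smul, mul_left_comm _ c,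
    ← Finset.mul_sum, tsum_mul_left, mul_add]

lemma Dt_zero (i : Fin m) : Dt i (0 : Jet m → ℝ) = 0 := by
  funext z
  simp [Dt, xpd_eq_lineDeriv, pd_eq_lineDeriv, lineDeriv]

noncomputable def truncCoord {k : ℕ} (a b : Fin m) (l : List (Fin m)) (w : Trunc m k) : ℝ :=
  if h : l.length < k + 1 then w.2 a b ⟨l.length, h⟩ l.get else 0

lemma truncCoord_truncProj {k : ℕ} (a b : Fin m) {l : List (Fin m)} (hl : l.length ≤ k)
    (z : Jet m) : truncCoord a b l (truncProj m k z) = z.2 a b l := by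
  simp [truncCoord, truncProj, Nat.lt_succ_of_le hl, List.ofFn_get]

lemma contDiff_truncCoord {k : ℕ} (a b : Fin m) (l : List (Fin m)) :
    ContDiff ℝ (⊤ : ℕ∞) (truncCoord (k := k) a b l) := by
  unfold truncCoord
  split_ifs with h
  · exact (LinearMap.toContinuousLinearMap
      { toFun := fun w : Trunc m k => w.2 a b ⟨l.length, h⟩ l.get
        map_add' := fun _ _ => rfl
        map_smul' := fun _ _ => rfl }).contDiff
  · exact contDiff_const

lemma isDF_Dt {k : ℕ} {F : Jet m → ℝ} (h : IsDF m k F) (i : Fin m) :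
    IsDF m (k + 1) (Dt i F) := by
  obtain ⟨fx, hfx, hfxF⟩ := isDF_xpd h i
  choose gg hgg hggF using fun a b (l : List (Fin m)) => isDF_pd h a b l
  refine ⟨fun w => fx (truncRes m k w) + ∑ n ∈ Finset.range (k + 1), ∑ l ∈ listsOfLength m n,
      ∑ a, ∑ b, truncCoord a b (l ++ [i]) w * gg a b l (truncRes m k w), ?_, fun z => ?_⟩
  · have hres : ContDiffOn ℝ (⊤ : ℕ∞) (truncRes m k) (truncDom m (k + 1)) :=
      (truncRes m k).contDiff.contDiffOn
    refine (hfx.comp hres mapsTo_truncRes).add (ContDiffOn.sum fun n _ => ContDiffOn.sum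
      fun l _ => ContDiffOn.sum fun a _ => ContDiffOn.sum fun b _ => ?_)
    exact (contDiff_truncCoord a b _).contDiffOn.mul ((hgg a b l).comp hres mapsTo_truncRes)
  · have hvanish : ∀ l : List (Fin m), k < l.length →
        ∑ a, ∑ b, z.2 a b ((l : MIdx m) + {i}) * pd a b (l : MIdx m) F z = 0 := fun l hl => by
      simp [pd_eq_zero_of_lt_card h (I := (l : MIdx m)) (by simpa using hl)]
    dsimp only
    rw [Dt, tsum_eq_sum_listsOfLength hvanish, hfxF, truncRes_truncProj]
    refine congrArg _ (Finset.sum_congr rfl fun n hn => Finset.sum_congr rfl fun l hl =>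
      Finset.sum_congr rfl fun a _ => Finset.sum_congr rfl fun b _ => ?_)
    have hlen : (l ++ [i]).length ≤ k + 1 := by
      simp [mem_listsOfLength.1 hl, Nat.lt_succ_iff.1 (Finset.mem_range.1 hn)]
    rw [truncCoord_truncProj a b hlen, ← hggF, ← Multiset.coe_add]
    rfl

lemma Dt_mem_diffFun {F : Jet m → ℝ} (hF : F ∈ diffFun m) (i : Fin m) : Dt i F ∈ diffFun m :=
  let ⟨_, h⟩ := hF; (isDF_Dt h i).mem_diffFun

lemma DtL_nil (F : Jet m → ℝ) : DtL [] F = F := rfl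

lemma DtL_cons (i : Fin m) (l : List (Fin m)) (F : Jet m → ℝ) :
    DtL (i :: l) F = Dt i (DtL l F) := rfl

lemma DtL_append (l l' : List (Fin m)) (F : Jet m → ℝ) :
    DtL (l ++ l') F = DtL l (DtL l' F) := List.foldr_append

lemma DtL_mem_diffFun {F : Jet m → ℝ} (hF : F ∈ diffFun m) (l : List (Fin m)) :
    DtL l F ∈ diffFun m := by
  induction l with
  | nil => exact hF
  | cons i l ih => exact Dt_mem_diffFun ih i

lemma DtL_zero (l : List (Fin m)) : DtL l (0 : Jet m → ℝ) = 0 := by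
  induction l with
  | nil => rfl
  | cons i l ih => rw [DtL_cons, ih, Dt_zero]

variable {z : Jet m}

lemma DtL_add {F G : Jet m → ℝ} (hF : F ∈ diffFun m) (hG : G ∈ diffFun m) (l : List (Fin m))
    (hz : z ∈ nondegSet m) : DtL l (F + G) z = DtL l F z + DtL l G z := by
  induction l generalizing z with
  | nil => rfl
  | cons i l ih =>
    rw [DtL_cons, Dt_congr (G := DtL l F + DtL l G) (fun w hw => ih hw) i hz,
      Dt_add (DtL_mem_diffFun hF l) (DtL_mem_diffFun hG l) hz]
    rfl

lemma DtL_const_smul (F : Jet m → ℝ) (c : ℝ) (l : List (Fin m)) (hz : z ∈ nondegSet m) :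
    DtL l (c • F) z = c * DtL l F z := by
  induction l generalizing z with
  | nil => rfl
  | cons i l ih =>
    rw [DtL_cons, Dt_congr (G := c • DtL l F) (fun w hw => ih hw) i hz]
    exact Dt_const_smul _ c z i

lemma DtL_sub {F G : Jet m → ℝ} (hF : F ∈ diffFun m) (hG : G ∈ diffFun m) (l : List (Fin m))
    (hz : z ∈ nondegSet m) : DtL l (F - G) z = DtL l F z - DtL l G z := by
  rw [sub_eq_add_neg, ← neg_one_smul ℝ G, DtL_add hF ((diffFun m).smul_mem _ hG) l hz,
    DtL_const_smul G _ l hz]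
  ring

lemma DtL_sum {ι : Type*} (s : Finset ι) {F : ι → Jet m → ℝ} (hF : ∀ j ∈ s, F j ∈ diffFun m)
    (l : List (Fin m)) (hz : z ∈ nondegSet m) :
    DtL l (∑ j ∈ s, F j) z = ∑ j ∈ s, DtL l (F j) z := by
  classical
  induction s using Finset.induction with
  | empty => simp [DtL_zero]
  | insert j s hj ih =>
    rw [Finset.sum_insert hj, Finset.sum_insert hj,
      DtL_add (hF j (s.mem_insert_self j)) (Submodule.sum_mem _ fun i hi =>
        hF i (Finset.mem_insert_of_mem hi)) l hz,
      ih fun i hi => hF i (Finset.mem_insert_of_mem hi)]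

end TotalDerivative

section EulerOperators

variable {F : Jet m → ℝ} {a b : Fin m}

lemma hEL_eq_sum_listsOfLength {k : ℕ} (hF : IsDF m k F) (I : MIdx m) (z : Jet m) :
    hEL a b I F z = ∑ n ∈ Finset.range (k - Multiset.card I + 1), ∑ J ∈ listsOfLength m n,
      (Nat.choose (Multiset.card I + n) (Multiset.card I) : ℝ) * (-1 : ℝ) ^ n *
        DtL J (pd a b (I + (J : MIdx m)) F) z := by
  rw [hEL, tsum_eq_sum_listsOfLength fun J hJ => ?_]
  · refine Finset.sum_congr rfl fun n _ => Finset.sum_congr rfl fun J hJ => ?_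
    rw [mem_listsOfLength.1 hJ]
  · rw [pd_eq_zero_of_lt_card hF (by simp; omega), DtL_zero]
    simp

lemma hEL_of_card_eq_three (hF : IsDF m 3 F) {I : MIdx m} (hI : Multiset.card I = 3) :
    hEL a b I F = pd a b I F := by
  funext z
  simp [hEL_eq_sum_listsOfLength hF, hI, sum_listsOfLength_zero, DtL_nil]

lemma hEL_of_card_eq_two (hF : IsDF m 3 F) {I : MIdx m} (hI : Multiset.card I = 2) :
    hEL a b I F = pd a b I F - (3 : ℝ) • ∑ j, Dt j (pd a b (I + {j}) F) := by
  funext z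
  simp only [hEL_eq_sum_listsOfLength hF, hI, Finset.sum_range_succ, Finset.sum_range_zero,
    sum_listsOfLength_zero, sum_listsOfLength_succ, DtL_cons, DtL_nil, add_coe_cons,
    Multiset.coe_nil, add_zero, Pi.sub_apply, Pi.smul_apply, Finset.sum_apply, smul_eq_mul]
  norm_num [Nat.choose, Finset.mul_sum]
  ring

lemma hEL_of_card_eq_one (hF : IsDF m 3 F) {I : MIdx m} (hI : Multiset.card I = 1) :
    hEL a b I F = pd a b I F - (2 : ℝ) • ∑ j, Dt j (pd a b (I + {j}) F)
      + (3 : ℝ) • ∑ j, ∑ k, Dt j (Dt k (pd a b (I + {j} + {k}) F)) := by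
  funext z
  simp only [hEL_eq_sum_listsOfLength hF, hI, Finset.sum_range_succ, Finset.sum_range_zero,
    sum_listsOfLength_zero, sum_listsOfLength_succ, DtL_cons, DtL_nil, add_coe_cons,
    Multiset.coe_nil, add_zero, Pi.sub_apply, Pi.add_apply, Pi.smul_apply, Finset.sum_apply,
    smul_eq_mul]
  norm_num [Nat.choose, Finset.mul_sum]
  ring

lemma hEL_zero (hF : IsDF m 3 F) :
    hEL a b 0 F = pd a b 0 F - ∑ j, Dt j (pd a b {j} F)
      + ∑ j, ∑ k, Dt j (Dt k (pd a b ({j} + {k}) F))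
      - ∑ j, ∑ k, ∑ l, Dt j (Dt k (Dt l (pd a b ({j} + {k} + {l}) F))) := by
  funext z
  simp only [hEL_eq_sum_listsOfLength hF, Multiset.card_zero, Finset.sum_range_succ,
    Finset.sum_range_zero, sum_listsOfLength_zero, sum_listsOfLength_succ, DtL_cons, DtL_nil,
    add_coe_cons, Multiset.coe_nil, add_zero, Pi.sub_apply, Pi.add_apply, Finset.sum_apply]
  norm_num [Nat.choose, Finset.mul_sum]
  ring

end EulerOperators

section Helmholtz

variable {T : Fin m → Fin m → Jet m → ℝ} {a b c d : Fin m} {I : MIdx m}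

lemma Helm_eq : Helm T a b c d I
    = pd c d I (T a b) - (-1 : ℝ) ^ Multiset.card I • hEL a b I (T c d) := rfl

lemma Helm_of_card_eq_three (hcd : IsDF m 3 (T c d)) (hI : Multiset.card I = 3) :
    Helm T a b c d I = pd c d I (T a b) + pd a b I (T c d) := by
  rw [Helm_eq, hEL_of_card_eq_three hcd hI, hI]
  module

lemma Helm_of_card_eq_two (hcd : IsDF m 3 (T c d)) (hI : Multiset.card I = 2) :
    Helm T a b c d I = pd c d I (T a b) - pd a b I (T c d)
      + (3 : ℝ) • ∑ j, Dt j (pd a b (I + {j}) (T c d)) := by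
  rw [Helm_eq, hEL_of_card_eq_two hcd hI, hI]
  module

lemma Helm_of_card_eq_one (hcd : IsDF m 3 (T c d)) (hI : Multiset.card I = 1) :
    Helm T a b c d I = pd c d I (T a b) + pd a b I (T c d)
      - (2 : ℝ) • ∑ j, Dt j (pd a b (I + {j}) (T c d))
      + (3 : ℝ) • ∑ j, ∑ k, Dt j (Dt k (pd a b (I + {j} + {k}) (T c d))) := by
  rw [Helm_eq, hEL_of_card_eq_one hcd hI, hI]
  module

lemma Helm_zero (hcd : IsDF m 3 (T c d)) :
    Helm T a b c d 0 = pd c d 0 (T a b) - pd a b 0 (T c d)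
      + ∑ j, Dt j (pd a b {j} (T c d))
      - ∑ j, ∑ k, Dt j (Dt k (pd a b ({j} + {k}) (T c d)))
      + ∑ j, ∑ k, ∑ l, Dt j (Dt k (Dt l (pd a b ({j} + {k} + {l}) (T c d)))) := by
  rw [Helm_eq, hEL_zero hcd, Multiset.card_zero]
  module

variable {z : Jet m}

lemma DtL_Helm_of_card_eq_three (hab : T a b ∈ diffFun m) (hcd : IsDF m 3 (T c d))
    (hI : Multiset.card I = 3) (l : List (Fin m)) (hz : z ∈ nondegSet m) :
    DtL l (Helm T a b c d I) z = DtL l (pd c d I (T a b)) z + DtL l (pd a b I (T c d)) z := by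
  rw [Helm_of_card_eq_three hcd hI,
    DtL_add (pd_mem_diffFun hab c d I) (pd_mem_diffFun hcd.mem_diffFun a b I) l hz]

lemma DtL_Helm_of_card_eq_two (hab : T a b ∈ diffFun m) (hcd : IsDF m 3 (T c d))
    (hI : Multiset.card I = 2) (l : List (Fin m)) (hz : z ∈ nondegSet m) :
    DtL l (Helm T a b c d I) z = DtL l (pd c d I (T a b)) z - DtL l (pd a b I (T c d)) z
      + 3 * ∑ j, DtL (l ++ [j]) (pd a b (I + {j}) (T c d)) z := by
  have hB : ∀ J, pd a b J (T c d) ∈ diffFun m := pd_mem_diffFun hcd.mem_diffFun a b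
  have hDB : ∀ j ∈ Finset.univ, Dt j (pd a b (I + {j}) (T c d)) ∈ diffFun m :=
    fun j _ => Dt_mem_diffFun (hB _) j
  rw [Helm_of_card_eq_two hcd hI,
    DtL_add (sub_mem (pd_mem_diffFun hab c d I) (hB I)) (Submodule.smul_mem _ _
      (Submodule.sum_mem _ hDB)) l hz, DtL_sub (pd_mem_diffFun hab c d I) (hB I) l hz,
    DtL_const_smul _ _ l hz, DtL_sum _ hDB l hz]
  simp only [DtL_append, DtL_cons, DtL_nil]


lemma DtL_Helm_of_card_eq_one (hab : T a b ∈ diffFun m) (hcd : IsDF m 3 (T c d))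
    (hI : Multiset.card I = 1) (l : List (Fin m)) (hz : z ∈ nondegSet m) :
    DtL l (Helm T a b c d I) z = DtL l (pd c d I (T a b)) z + DtL l (pd a b I (T c d)) z
      - 2 * ∑ j, DtL (l ++ [j]) (pd a b (I + {j}) (T c d)) z
      + 3 * ∑ j, ∑ k, DtL (l ++ [j, k]) (pd a b (I + {j} + {k}) (T c d)) z := by
  have hA : pd c d I (T a b) ∈ diffFun m := pd_mem_diffFun hab c d I
  have hB : ∀ J, pd a b J (T c d) ∈ diffFun m := pd_mem_diffFun hcd.mem_diffFun a b
  have hDB : ∀ j ∈ Finset.univ, Dt j (pd a b (I + {j}) (T c d)) ∈ diffFun m :=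
    fun j _ => Dt_mem_diffFun (hB _) j
  have hDDB : ∀ j k, Dt j (Dt k (pd a b (I + {j} + {k}) (T c d))) ∈ diffFun m :=
    fun j k => Dt_mem_diffFun (Dt_mem_diffFun (hB _) k) j
  have hsum₂ : DtL l (∑ j, ∑ k, Dt j (Dt k (pd a b (I + {j} + {k}) (T c d)))) z
      = ∑ j, ∑ k, DtL l (Dt j (Dt k (pd a b (I + {j} + {k}) (T c d)))) z := by
    rw [DtL_sum _ (fun j _ => Submodule.sum_mem _ fun k _ => hDDB j k) l hz]
    exact Finset.sum_congr rfl fun j _ => DtL_sum _ (fun k _ => hDDB j k) l hz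
  rw [Helm_of_card_eq_one hcd hI,
    DtL_add (sub_mem (add_mem hA (hB I)) (Submodule.smul_mem _ _ (Submodule.sum_mem _ hDB)))
      (Submodule.smul_mem _ _ (Submodule.sum_mem _ fun j _ => Submodule.sum_mem _ fun k _ =>
        hDDB j k)) l hz,
    DtL_sub (add_mem hA (hB I)) (Submodule.smul_mem _ _ (Submodule.sum_mem _ hDB)) l hz,
    DtL_add hA (hB I) l hz, DtL_const_smul _ _ l hz, DtL_const_smul _ _ l hz,
    DtL_sum _ hDB l hz, hsum₂]
  simp only [DtL_append, DtL_cons, DtL_nil]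

lemma Helm_sub_Helm_swap_of_card_eq_three (hab : IsDF m 3 (T a b)) (hcd : IsDF m 3 (T c d))
    (hI : Multiset.card I = 3) : Helm T a b c d I z - Helm T c d a b I z = 0 := by
  rw [Helm_of_card_eq_three hcd hI, Helm_of_card_eq_three hab hI, Pi.add_apply, Pi.add_apply]
  ring

lemma Helm_add_Helm_swap_of_card_eq_two (hab : IsDF m 3 (T a b)) (hcd : IsDF m 3 (T c d))
    (hI : Multiset.card I = 2) (hz : z ∈ nondegSet m) :
    Helm T a b c d I z + Helm T c d a b I z
      = 3 * ∑ k, Dt k (Helm T a b c d (I + {k})) z := by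
  have e₃ := fun k => DtL_Helm_of_card_eq_three (I := I + {k}) hab.mem_diffFun hcd
    (by simp [hI]) [k] hz
  simp only [DtL_cons, DtL_nil] at e₃
  rw [Helm_of_card_eq_two hcd hI, Helm_of_card_eq_two hab hI]
  simp only [e₃, Pi.add_apply, Pi.sub_apply, Pi.smul_apply, Finset.sum_apply, smul_eq_mul,
    Finset.sum_add_distrib]
  ring

lemma Helm_sub_Helm_swap_of_card_eq_one (hab : IsDF m 3 (T a b)) (hcd : IsDF m 3 (T c d))
    (hI : Multiset.card I = 1) (hz : z ∈ nondegSet m) :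
    Helm T a b c d I z - Helm T c d a b I z
      = 2 * (∑ j, Dt j (Helm T a b c d (I + {j})) z)
        - 3 * (∑ j, ∑ k, Dt j (Dt k (Helm T a b c d (I + {j} + {k}))) z) := by
  have e₂ := fun j => DtL_Helm_of_card_eq_two (I := I + {j}) hab.mem_diffFun hcd
    (by simp [hI]) [j] hz
  have e₃ := fun j k => DtL_Helm_of_card_eq_three (I := I + {j} + {k}) hab.mem_diffFun hcd
    (by simp [hI]) [j, k] hz
  simp only [DtL_cons, DtL_nil, List.cons_append, List.nil_append] at e₂ e₃
  rw [Helm_of_card_eq_one hcd hI, Helm_of_card_eq_one hab hI]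
  simp only [e₂, e₃, Pi.add_apply, Pi.sub_apply, Pi.smul_apply, Finset.sum_apply, smul_eq_mul,
    Finset.sum_add_distrib, Finset.sum_sub_distrib, ← Finset.mul_sum]
  ring

lemma Helm_add_Helm_swap_zero (hab : IsDF m 3 (T a b)) (hcd : IsDF m 3 (T c d))
    (hz : z ∈ nondegSet m) :
    Helm T a b c d 0 z + Helm T c d a b 0 z
      = (∑ i, Dt i (Helm T a b c d {i}) z)
        - (∑ i, ∑ j, Dt i (Dt j (Helm T a b c d ({i} + {j}))) z)
        + (∑ i, ∑ j, ∑ k, Dt i (Dt j (Dt k (Helm T a b c d ({i} + {j} + {k})))) z) := by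
  have e₁ := fun i => DtL_Helm_of_card_eq_one (I := {i}) hab.mem_diffFun hcd (by simp) [i] hz
  have e₂ := fun i j => DtL_Helm_of_card_eq_two (I := {i} + {j}) hab.mem_diffFun hcd
    (by simp) [i, j] hz
  have e₃ := fun i j k => DtL_Helm_of_card_eq_three (I := {i} + {j} + {k}) hab.mem_diffFun hcd
    (by simp) [i, j, k] hz
  simp only [DtL_cons, DtL_nil, List.cons_append, List.nil_append] at e₁ e₂ e₃
  rw [Helm_zero hcd, Helm_zero hab]
  simp only [e₁, e₂, e₃, Pi.add_apply, Pi.sub_apply, Finset.sum_apply,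
    Finset.sum_add_distrib, Finset.sum_sub_distrib, ← Finset.mul_sum]
  ring

end Helmholtz

/-- The integrability conditions satisfied by the Helmholtz components of
a third order source form. -/
theorem stmt2 {m : ℕ} (S : SourceForm m 3) :
    ∀ a b c d : Fin m, ∀ z ∈ JetDom m,
      (Helm S.T a b c d 0 z + Helm S.T c d a b 0 z
        = (∑ i, Dt i (Helm S.T a b c d {i}) z)
          - (∑ i, ∑ j, Dt i (Dt j (Helm S.T a b c d ({i} + {j}))) z)
          + (∑ i, ∑ j, ∑ k, Dt i (Dt j (Dt k (Helm S.T a b c d ({i} + {j} + {k})))) z))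
      ∧ (∀ i, Helm S.T a b c d {i} z - Helm S.T c d a b {i} z
        = 2 * (∑ j, Dt j (Helm S.T a b c d ({i} + {j})) z)
          - 3 * (∑ j, ∑ k, Dt j (Dt k (Helm S.T a b c d ({i} + {j} + {k}))) z))
      ∧ (∀ i j, Helm S.T a b c d ({i} + {j}) z + Helm S.T c d a b ({i} + {j}) z
        = 3 * ∑ k, Dt k (Helm S.T a b c d ({i} + {j} + {k})) z)
      ∧ (∀ i j k, Helm S.T a b c d ({i} + {j} + {k}) z
          - Helm S.T c d a b ({i} + {j} + {k}) z = 0) := by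
  intro a b c d z hz
  have hab := S.order a b
  have hcd := S.order c d
  exact ⟨Helm_add_Helm_swap_zero hab hcd hz.2,
    fun i => Helm_sub_Helm_swap_of_card_eq_one hab hcd (by simp) hz.2,
    fun i j => Helm_add_Helm_swap_of_card_eq_two hab hcd (by simp) hz.2,
    fun i j k => Helm_sub_Helm_swap_of_card_eq_three hab hcd (by simp)⟩

end JetMetric
end

section
/- Let T be a third order divergence-free source form. Then for all indices a, b, c₁, c₂, i₁, i₂, i₃: the symmetrization over the three indices a, b, i₁ of ∂^{c₁c₂,i₁i₂i₃} T^{ab} equals (1/3) ∂^{c₁c₂,abi₁} T^{i₂i₃}. -/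
/-!
A source form of order 3 depends only on the coordinates `g_{ab,I}` with `|I| ≤ 3`, and so do
`∂/∂x^i` of it and the Christoffel symbols. Hence the divergence `D_b T^{ab} + Γ^a_{bc} T^{bc}` is
affine in the fourth order coordinates, and moving the jet along `g_{c₁c₂,K}` with `|K| = 4`
changes it by `Σ_b (count_b K / 4) ∂^{c₁c₂,K∖b} T^{ab}`: the weight comes from counting the
ordered lists `l` with `l + b = K`. So for a divergence-free `T` this sum over the elements
of `K` vanishes, and five instances of it, combined with the symmetry of `T`, give the claim.
-/

open scoped BigOperators

section

open Finset Nat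

namespace Multiset

variable {α : Type*} [DecidableEq α]

theorem prod_factorial_count_eq_count_mul {M : Multiset α} {b : α} (hb : b ∈ M) :
    ∏ s ∈ M.toFinset, (M.count s)! =
      M.count b * ∏ s ∈ (M.erase b).toFinset, ((M.erase b).count s)! := by
  have hsub : (M.erase b).toFinset ⊆ M.toFinset := fun s hs =>
    mem_toFinset.2 (mem_of_mem_erase (mem_toFinset.1 hs))
  have hb' : b ∈ M.toFinset := mem_toFinset.2 hb
  rw [prod_subset hsub fun s _ hs => by rw [count_eq_zero.2 (mt mem_toFinset.2 hs)]; rfl,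
    ← mul_prod_erase _ _ hb', ← mul_prod_erase _ _ hb', ← mul_assoc]
  congr 1
  · obtain ⟨n, hn⟩ := Nat.exists_eq_add_one_of_ne_zero (count_ne_zero.2 hb)
    rw [count_erase_self, hn, Nat.add_sub_cancel, factorial_succ]
  · exact prod_congr rfl fun s hs => by rw [count_erase_of_ne (ne_of_mem_erase hs)]

theorem mem_lists_toFinset {M : Multiset α} {l : List α} : l ∈ M.lists.toFinset ↔ M = l := by
  rw [mem_toFinset, mem_lists_iff, quot_mk_to_coe]

theorem eq_add_singleton_iff_eq_erase {K J : Multiset α} {b : α} (hb : b ∈ K) :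
    K = J + {b} ↔ J = K.erase b := by
  rw [add_comm, singleton_add]
  constructor
  · rintro rfl
    exact (erase_cons_head b J).symm
  · rintro rfl
    exact (cons_erase hb).symm

theorem lists_toFinset_eq_biUnion {M : Multiset α} (hM : M ≠ 0) :
    M.lists.toFinset =
      M.toFinset.biUnion fun b => (M.erase b).lists.toFinset.image (List.cons b) := by
  ext l
  simp only [mem_biUnion, mem_image, mem_lists_toFinset]
  simp only [mem_toFinset]
  constructor
  · rintro rfl
    obtain _ | ⟨b, l'⟩ := l
    · exact absurd rfl hM
    · exact ⟨b, by simp, l', by simp, rfl⟩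
  · rintro ⟨b, hb, l', hl', rfl⟩
    rw [← cons_coe, ← hl', cons_erase hb]

theorem card_lists_toFinset_mul_prod_factorial (M : Multiset α) :
    #M.lists.toFinset * ∏ s ∈ M.toFinset, (M.count s)! = (Multiset.card M)! := by
  induction hn : Multiset.card M generalizing M with
  | zero => simp [card_eq_zero.1 hn, ← coe_nil, lists_coe]
  | succ n ih =>
    have hM : M ≠ 0 := by rintro rfl; simp at hn
    have hfiber : ∀ b ∈ M.toFinset,
        #((M.erase b).lists.toFinset.image (List.cons b)) * ∏ s ∈ M.toFinset, (M.count s)! =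
          M.count b * n ! := by
      intro b hb
      have hb : b ∈ M := mem_toFinset.1 hb
      rw [Finset.card_image_of_injective _ List.cons_injective,
        prod_factorial_count_eq_count_mul hb, mul_left_comm,
        ih _ (by rw [card_erase_of_mem hb, hn]; rfl)]
    rw [lists_toFinset_eq_biUnion hM, card_biUnion, sum_mul, sum_congr rfl hfiber, ← sum_mul,
      toFinset_sum_count_eq, hn, factorial_succ]
    intro b _ b' _ hbb'
    refine Finset.disjoint_left.2 ?_
    simp only [mem_image]
    rintro _ ⟨l, -, rfl⟩ ⟨l', -, h⟩
    exact hbb' (List.cons_eq_cons.1 h).1.symm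

end Multiset

end

namespace JetMetric

section

variable {m k : ℕ}

open Nat in
theorem idxWt_self (K : MIdx m) :
    idxWt K K = (∏ s ∈ K.toFinset, (K.count s)! : ℕ) / ((Multiset.card K)! : ℝ) := by
  rw [idxWt, if_pos rfl, Nat.cast_prod]

theorem idxWt_of_ne {I J : MIdx m} (h : I ≠ J) : idxWt I J = 0 := if_neg h

theorem idxWt_of_card_ne {I J : MIdx m} (h : Multiset.card I ≠ Multiset.card J) :
    idxWt I J = 0 :=
  idxWt_of_ne fun e => h (congrArg _ e)

theorem tsum_idxWt_add_singleton (K : MIdx m) (b : Fin m) :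
    ∑' l : List (Fin m), idxWt K (l + {b}) = K.count b / Multiset.card K := by
  by_cases hb : b ∈ K
  · have hL := Multiset.card_lists_toFinset_mul_prod_factorial (K.erase b)
    set L := (K.erase b).lists.toFinset
    have hL0 : (L.card : ℝ) ≠ 0 := by
      exact_mod_cast left_ne_zero_of_mul (hL ▸ Nat.factorial_ne_zero _)
    have hterm : ∀ l : List (Fin m), idxWt K (l + {b}) = if l ∈ L then idxWt K K else 0 := by
      intro l
      have hmem : l ∈ L ↔ K = l + {b} := by
        rw [Multiset.mem_lists_toFinset, eq_comm, Multiset.eq_add_singleton_iff_eq_erase hb]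
      by_cases h : K = l + {b}
      · rw [← h, if_pos (hmem.2 h)]
      · rw [idxWt_of_ne h, if_neg (mt hmem.1 h)]
    rw [tsum_congr hterm, tsum_eq_sum (s := L) fun l hl => if_neg hl,
      Finset.sum_congr rfl fun l hl => if_pos hl, Finset.sum_const, nsmul_eq_mul, idxWt_self,
      Multiset.prod_factorial_count_eq_count_mul hb, ← Multiset.card_erase_add_one hb,
      Nat.factorial_succ, ← hL]
    push_cast
    field_simp
  · rw [Multiset.count_eq_zero.2 hb, Nat.cast_zero, zero_div]
    refine (tsum_congr fun l => idxWt_of_ne ?_).trans tsum_zero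
    rintro rfl
    exact hb (Multiset.mem_add.2 (Or.inr (Multiset.mem_singleton_self b)))

theorem pairWt_comm_left (a b c d : Fin m) : pairWt a b c d = pairWt b a c d := by
  simp only [pairWt, and_comm, add_comm]

theorem pairWt_comm_right (a b c d : Fin m) : pairWt a b c d = pairWt a b d c := by
  simp only [pairWt, add_comm]

theorem sum_sum_pairWt_mul (a b : Fin m) (Q : Fin m → Fin m → ℝ) :
    ∑ c, ∑ d, pairWt a b c d * Q c d = (Q a b + Q b a) / 2 := by
  simp [pairWt, add_div, add_mul, ite_and, Finset.sum_add_distrib, ite_div, ite_mul]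
  ring

theorem pd_comm (a b : Fin m) (I : MIdx m) (F : Jet m → ℝ) : pd a b I F = pd b a I F := by
  have h : pairWt a b = pairWt b a := funext fun c => funext fun d => pairWt_comm_left a b c d
  unfold pd
  rw [h]

noncomputable def jetShift (a b : Fin m) (I : MIdx m) (t : ℝ) (z : Jet m) : Jet m :=
  (z.1, fun c d J => z.2 c d J + t * (pairWt a b c d * idxWt I J))

theorem pd_eq_deriv_jetShift (a b : Fin m) (I : MIdx m) (F : Jet m → ℝ) (z : Jet m) :
    pd a b I F z = deriv (fun t => F (jetShift a b I t z)) 0 := rfl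

theorem jetShift_snd (a b : Fin m) (I : MIdx m) (t : ℝ) (z : Jet m) (c d : Fin m) (J : MIdx m) :
    (jetShift a b I t z).2 c d J = z.2 c d J + t * (pairWt a b c d * idxWt I J) := rfl

theorem jetShift_snd_of_card_ne {a b : Fin m} {I J : MIdx m}
    (h : Multiset.card I ≠ Multiset.card J) (t : ℝ) (z : Jet m) (c d : Fin m) :
    (jetShift a b I t z).2 c d J = z.2 c d J := by
  rw [jetShift_snd, idxWt_of_card_ne h, mul_zero, mul_zero, add_zero]

theorem jetShift_mem_JetDom {a b : Fin m} {I : MIdx m} (hI : I ≠ 0) (t : ℝ) {z : Jet m}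
    (hz : z ∈ JetDom m) : jetShift a b I t z ∈ JetDom m := by
  refine ⟨fun c d J => ?_, ?_⟩
  · rw [jetShift_snd, jetShift_snd, hz.1, pairWt_comm_right]
  · convert hz.2 using 2
    ext c d
    exact jetShift_snd_of_card_ne (by simpa using hI) t z c d

theorem Gamma_jetShift {a b : Fin m} {I : MIdx m} (hI : 1 < Multiset.card I) (t : ℝ) (z : Jet m)
    (c d e : Fin m) : Gamma c d e (jetShift a b I t z) = Gamma c d e z := by
  have h₀ : gMat (jetShift a b I t z) = gMat z := by
    ext c d
    exact jetShift_snd_of_card_ne (by rw [Multiset.card_zero]; omega) t z c d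
  have h₁ : ∀ x c d, (jetShift a b I t z).2 c d {x} = z.2 c d {x} := fun x =>
    jetShift_snd_of_card_ne (by simp; omega) t z
  simp only [Gamma, ginv, h₀, h₁]

namespace IsDF

variable {F : Jet m → ℝ}

theorem apply_congr (hF : IsDF m k F) {z z' : Jet m} (h₁ : z.1 = z'.1)
    (h₂ : ∀ c d J, Multiset.card J ≤ k → z.2 c d J = z'.2 c d J) : F z = F z' := by
  obtain ⟨f, -, hf⟩ := hF
  rw [hf, hf, truncProj, truncProj, h₁]
  congr
  funext c d j p
  exact h₂ c d _ (by simp; omega)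

theorem apply_jetShift (hF : IsDF m k F) {I : MIdx m} (hI : k < Multiset.card I) (a b : Fin m)
    (t : ℝ) (z : Jet m) : F (jetShift a b I t z) = F z :=
  hF.apply_congr rfl fun c d _ hJ => jetShift_snd_of_card_ne (by omega) t z c d

theorem pd_eq_zero (hF : IsDF m k F) {I : MIdx m} (hI : k < Multiset.card I) (a b : Fin m)
    (z : Jet m) : pd a b I F z = 0 := by
  simp only [pd_eq_deriv_jetShift, hF.apply_jetShift hI, deriv_const]

theorem pd_jetShift (hF : IsDF m k F) {I : MIdx m} (hI : k < Multiset.card I) (a b c d : Fin m)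
    (J : MIdx m) (t : ℝ) (z : Jet m) : pd c d J F (jetShift a b I t z) = pd c d J F z := by
  simp only [pd_eq_deriv_jetShift]
  congr 1
  funext s
  refine hF.apply_congr rfl fun c' d' J' hJ' => ?_
  simp only [jetShift_snd, idxWt_of_card_ne (show Multiset.card I ≠ Multiset.card J' by omega),
    mul_zero, add_zero]

theorem xpd_jetShift (hF : IsDF m k F) {I : MIdx m} (hI : k < Multiset.card I) (a b i : Fin m)
    (t : ℝ) (z : Jet m) : xpd i F (jetShift a b I t z) = xpd i F z := by
  simp only [xpd]
  congr 1
  funext s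
  exact hF.apply_congr rfl fun c d J hJ => jetShift_snd_of_card_ne (by omega) t z c d

theorem summable_sum_sum_mul_pd (hF : IsDF m k F) (w : List (Fin m) → Fin m → Fin m → ℝ)
    (z : Jet m) : Summable fun l : List (Fin m) => ∑ c, ∑ d, w l c d * pd c d l F z := by
  refine summable_of_hasFiniteSupport ((List.finite_length_le (Fin m) k).subset fun l hl => ?_)
  by_contra hlk
  refine hl (Finset.sum_eq_zero fun c _ => Finset.sum_eq_zero fun d _ => ?_)
  rw [hF.pd_eq_zero (by simpa using hlk), mul_zero]

theorem Dt_jetShift (hF : IsDF m k F) {K : MIdx m}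
    (hK : Multiset.card K = k + 1) (c₁ c₂ b : Fin m) (z : Jet m) :
    Dt b F (jetShift c₁ c₂ K 1 z) =
      Dt b F z + K.count b / (k + 1) * pd c₁ c₂ (K.erase b) F z := by
  have hk : k < Multiset.card K := by omega
  have hcoef : ∀ l : List (Fin m), ∑ c, ∑ d, pairWt c₁ c₂ c d * idxWt K (l + {b}) * pd c d l F z
      = idxWt K (l + {b}) * pd c₁ c₂ (K.erase b) F z := by
    intro l
    by_cases h : K = l + {b}
    · have hb : b ∈ K := h ▸ Multiset.mem_add.2 (Or.inr (Multiset.mem_singleton_self b))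
      simp only [mul_assoc, sum_sum_pairWt_mul, pd_comm c₂ c₁,
        (Multiset.eq_add_singleton_iff_eq_erase hb).1 h]
      ring
    · simp only [idxWt_of_ne h, mul_zero, zero_mul, Finset.sum_const_zero]
  simp only [Dt, hF.xpd_jetShift hk, hF.pd_jetShift hk, jetShift_snd, one_mul, add_mul,
    Finset.sum_add_distrib]
  rw [(hF.summable_sum_sum_mul_pd _ z).tsum_add
      (hF.summable_sum_sum_mul_pd (fun l c d => pairWt c₁ c₂ c d * idxWt K (l + {b})) z),
    tsum_congr hcoef, tsum_mul_right, tsum_idxWt_add_singleton, hK]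
  push_cast
  ring

end IsDF

theorem DivFree.sum_map_pd_erase_eq_zero {S : SourceForm m k} (hdiv : DivFree S) (hk : 1 ≤ k)
    (a c₁ c₂ : Fin m) {K : MIdx m} (hK : Multiset.card K = k + 1) {z : Jet m}
    (hz : z ∈ JetDom m) : (K.map fun b => pd c₁ c₂ (K.erase b) (S.T a b) z).sum = 0 := by
  have hK₀ : K ≠ 0 := by
    rintro rfl
    simp at hK
  have h₀ := hdiv a z hz
  have h₁ := hdiv a _ (jetShift_mem_JetDom (a := c₁) (b := c₂) hK₀ 1 hz)
  simp only [(S.order a _).Dt_jetShift hK,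
    (S.order _ _).apply_jetShift (show k < Multiset.card K by omega),
    Gamma_jetShift (show 1 < Multiset.card K by omega), Finset.sum_add_distrib] at h₁
  have hsum : ∑ b, (K.count b : ℝ) / (k + 1) * pd c₁ c₂ (K.erase b) (S.T a b) z = 0 := by
    linarith
  rw [Finset.sum_multiset_map_count, Finset.sum_subset (Finset.subset_univ _) fun b _ hb => by
    rw [Multiset.count_eq_zero.2 (mt Multiset.mem_toFinset.2 hb), zero_smul]]
  calc ∑ b, K.count b • pd c₁ c₂ (K.erase b) (S.T a b) z
      = (k + 1) * ∑ b, (K.count b : ℝ) / (k + 1) * pd c₁ c₂ (K.erase b) (S.T a b) z := by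
        rw [Finset.mul_sum]
        refine Finset.sum_congr rfl fun b _ => ?_
        rw [nsmul_eq_mul]
        field_simp
    _ = 0 := by rw [hsum, mul_zero]

theorem DivFree.pd_sum_four_eq_zero {S : SourceForm m 3} (hdiv : DivFree S)
    (a c₁ c₂ x₁ x₂ x₃ x₄ : Fin m) {z : Jet m} (hz : z ∈ JetDom m) :
    pd c₁ c₂ ({x₂} + {x₃} + {x₄}) (S.T a x₁) z + pd c₁ c₂ ({x₁} + {x₃} + {x₄}) (S.T a x₂) z
      + pd c₁ c₂ ({x₁} + {x₂} + {x₄}) (S.T a x₃) z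
      + pd c₁ c₂ ({x₁} + {x₂} + {x₃}) (S.T a x₄) z = 0 := by
  set K : MIdx m := {x₁} + {x₂} + {x₃} + {x₄} with hK
  have h := hdiv.sum_map_pd_erase_eq_zero (by norm_num) a c₁ c₂ (K := K) (by simp [hK]) hz
  have erase_eq : ∀ J x, K = J + {x} → K.erase x = J := fun J x h =>
    ((Multiset.eq_add_singleton_iff_eq_erase (h ▸ by simp)).1 h).symm
  have sum_map : ∀ f : Fin m → ℝ, (K.map f).sum = f x₁ + f x₂ + f x₃ + f x₄ := fun f => by
    simp [hK, add_assoc]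
  rwa [sum_map, erase_eq ({x₂} + {x₃} + {x₄}) x₁ (by rw [hK]; abel),
    erase_eq ({x₁} + {x₃} + {x₄}) x₂ (by rw [hK]; abel),
    erase_eq ({x₁} + {x₂} + {x₄}) x₃ (by rw [hK]; abel), erase_eq _ x₄ rfl] at h

end

/-- For a third order divergence-free source form, the symmetrization
over the three indices `a, b, i₁` of `∂^{c₁c₂,i₁i₂i₃} T^{ab}` equals
`(1/3) ∂^{c₁c₂,abi₁} T^{i₂i₃}`. -/
theorem stmt16 {m : ℕ} (S : SourceForm m 3) (hdiv : DivFree S) :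
    ∀ a b c₁ c₂ i₁ i₂ i₃ : Fin m, ∀ z ∈ JetDom m,
      (pd c₁ c₂ ({i₁} + {i₂} + {i₃}) (S.T a b) z
        + pd c₁ c₂ ({i₁} + {i₂} + {i₃}) (S.T b a) z
        + pd c₁ c₂ ({a} + {i₂} + {i₃}) (S.T i₁ b) z
        + pd c₁ c₂ ({a} + {i₂} + {i₃}) (S.T b i₁) z
        + pd c₁ c₂ ({b} + {i₂} + {i₃}) (S.T a i₁) z
        + pd c₁ c₂ ({b} + {i₂} + {i₃}) (S.T i₁ a) z) / 6
      = (1 / 3) * pd c₁ c₂ ({a} + {b} + {i₁}) (S.T i₂ i₃) z := by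
  intro a b c₁ c₂ i₁ i₂ i₃ z hz
  have e₁ := hdiv.pd_sum_four_eq_zero a c₁ c₂ b i₁ i₂ i₃ hz
  have e₂ := hdiv.pd_sum_four_eq_zero b c₁ c₂ a i₁ i₂ i₃ hz
  have e₃ := hdiv.pd_sum_four_eq_zero i₁ c₁ c₂ a b i₂ i₃ hz
  have e₄ := hdiv.pd_sum_four_eq_zero i₂ c₁ c₂ a b i₁ i₃ hz
  have e₅ := hdiv.pd_sum_four_eq_zero i₃ c₁ c₂ a b i₁ i₂ hz
  simp only [S.symm b a, S.symm i₁ a, S.symm i₁ b, S.symm i₂ a, S.symm i₂ b, S.symm i₂ i₁,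
    S.symm i₃ a, S.symm i₃ b, S.symm i₃ i₁, S.symm i₃ i₂] at e₁ e₂ e₃ e₄ e₅ ⊢
  linarith

end JetMetric
end
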